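/- arXiv:1112.1113 — 7 statements merged into one kernel-verified Lean document; each statement's English description precedes it below -/
import Mathlib

section
/- Let 0 < σ₁ < σ₂. The maximum of φ(1) over continuous piecewise-C¹ functions φ:[0,1]→ℝ with φ(0)=0 subject to the constraints ∫₀^s (φ'(r))²/(2σ₁²) dr ≤ s·log 2 for all 0 ≤ s ≤ 1/2 and ∫₀^{1/2} (φ'(r))²/(2σ₁²) dr + ∫_{1/2}^s (φ'(r))²/(2σ₂²) dr ≤ s·log 2 for all 1/2 ≤ s ≤ 1, equals √((σ₁²+σ₂²)·log 2). -/
open MeasureTheory Real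

lemma aux_cS {L S : ℝ} (hL : 0 < L) (hS : 0 < S) :
    Real.sqrt (L / S) * S = Real.sqrt (S * L) := by
  rw [show Real.sqrt (L / S) * S = Real.sqrt (L / S) * Real.sqrt (S ^ 2) by
        rw [Real.sqrt_sq hS.le],
      ← Real.sqrt_mul (by positivity)]
  congr 1
  field_simp

set_option maxHeartbeats 1600000 in
/-- With increasing variances 0 < σ₁ < σ₂, the maximum of φ(1) over
absolutely continuous φ on [0,1] with φ(0)=0 subject to the large-deviation
constraints equals √((σ₁²+σ₂²)·log 2). -/
theorem stmt0 (σ1 σ2 : ℝ) (h1 : 0 < σ1) (h12 : σ1 < σ2) :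
    IsGreatest
      {x : ℝ | ∃ φ φ' : ℝ → ℝ,
        ContinuousOn φ (Set.Icc 0 1) ∧
        φ 0 = 0 ∧
        (∀ s ∈ Set.Icc (0:ℝ) 1, φ s = ∫ r in (0:ℝ)..s, φ' r) ∧
        IntervalIntegrable (fun r => (φ' r)^2) volume 0 1 ∧
        (∀ s ∈ Set.Icc (0:ℝ) (1/2),
          (∫ r in (0:ℝ)..s, (φ' r)^2 / (2*σ1^2)) ≤ s * Real.log 2) ∧
        (∀ s ∈ Set.Icc (1/2:ℝ) 1,
          (∫ r in (0:ℝ)..(1/2:ℝ), (φ' r)^2 / (2*σ1^2)) +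
            (∫ r in (1/2:ℝ)..s, (φ' r)^2 / (2*σ2^2)) ≤ s * Real.log 2) ∧
        x = φ 1}
      (Real.sqrt ((σ1^2 + σ2^2) * Real.log 2)) := by
  have h2 : (0:ℝ) < σ2 := h1.trans h12
  set L : ℝ := Real.log 2 with hLdef
  have hL : 0 < L := Real.log_pos one_lt_two
  set S : ℝ := σ1^2 + σ2^2 with hSdef
  have hS : 0 < S := by positivity
  set c : ℝ := Real.sqrt (L / S) with hcdef
  have hc : 0 < c := Real.sqrt_pos.2 (by positivity)
  have hc2 : c ^ 2 = L / S := Real.sq_sqrt (by positivity)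
  have hc2' : c ^ 2 * S = L := by rw [hc2]; field_simp
  have hcS : c * S = Real.sqrt (S * L) := aux_cS hL hS
  set a : ℝ := 2 * σ1^2 * c with hadef
  set b : ℝ := 2 * σ2^2 * c with hbdef
  have ha : 0 < a := by positivity
  have hb : 0 < b := by positivity
  set f : ℝ → ℝ := fun r => if r ≤ (1/2:ℝ) then a else b with hfdef
  have hfm : Measurable f := Measurable.ite measurableSet_Iic measurable_const measurable_const
  have hfi : ∀ u v : ℝ, IntervalIntegrable f volume u v := by
    intro u v
    refine (intervalIntegrable_const (c := |a| + |b|)).mono_fun'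
      (hfm.aestronglyMeasurable) (ae_of_all _ fun r => ?_)
    simp only [Real.norm_eq_abs, hfdef]
    split_ifs
    · exact le_add_of_nonneg_right (abs_nonneg _)
    · exact le_add_of_nonneg_left (abs_nonneg _)
  have hfsq : ∀ u v : ℝ, IntervalIntegrable (fun r => (f r)^2) volume u v := by
    intro u v
    refine (intervalIntegrable_const (c := a^2 + b^2)).mono_fun'
      ((hfm.pow_const 2).aestronglyMeasurable) (ae_of_all _ fun r => ?_)
    simp only [Real.norm_eq_abs, hfdef, sq_abs, abs_sq]
    split_ifs <;> nlinarith [sq_nonneg a, sq_nonneg b]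
  -- integral computations for the step function
  have key1 : ∀ s : ℝ, 0 ≤ s → s ≤ 1/2 → ∀ C : ℝ,
      (∫ r in (0:ℝ)..s, (f r)^2 / C) = s * (a^2 / C) := by
    intro s h0 hs C
    rw [intervalIntegral.integral_congr (g := fun _ => a^2 / C) ?_,
      intervalIntegral.integral_const]
    · rw [smul_eq_mul]; ring
    · intro r hr
      rw [Set.uIcc_of_le h0] at hr
      have : r ≤ 1/2 := hr.2.trans hs
      simp only [hfdef]
      rw [if_pos this]
  have key2 : ∀ s : ℝ, 1/2 ≤ s → ∀ C : ℝ,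
      (∫ r in (1/2:ℝ)..s, (f r)^2 / C) = (s - 1/2) * (b^2 / C) := by
    intro s hs C
    rw [intervalIntegral.integral_congr_ae (g := fun _ => b^2 / C)
        (ae_of_all _ fun r hr => ?_), intervalIntegral.integral_const]
    · rw [smul_eq_mul]
    · rw [Set.uIoc_of_le hs] at hr
      have : ¬ r ≤ 1/2 := not_le.2 hr.1
      simp only [hfdef]
      rw [if_neg this]
  have keyA : (∫ r in (0:ℝ)..(1/2:ℝ), f r) = a / 2 := by
    rw [intervalIntegral.integral_congr (g := fun _ => a) ?_,
      intervalIntegral.integral_const]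
    · rw [smul_eq_mul]; ring
    · intro r hr
      rw [Set.uIcc_of_le (by norm_num)] at hr
      simp only [hfdef]
      rw [if_pos hr.2]
  have keyB : (∫ r in (1/2:ℝ)..(1:ℝ), f r) = b / 2 := by
    rw [intervalIntegral.integral_congr_ae (g := fun _ => b)
        (ae_of_all _ fun r hr => ?_), intervalIntegral.integral_const]
    · rw [smul_eq_mul]; ring
    · rw [Set.uIoc_of_le (by norm_num)] at hr
      have : ¬ r ≤ 1/2 := not_le.2 hr.1
      simp only [hfdef]
      rw [if_neg this]
  clear_value L S c a b f
  constructor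
  · -- membership
    refine ⟨fun s => ∫ r in (0:ℝ)..s, f r, f, ?_, ?_, fun s _ => rfl, hfsq 0 1, ?_, ?_, ?_⟩
    · have := intervalIntegral.continuousOn_primitive_interval' (hfi 0 1) Set.left_mem_uIcc
      rwa [Set.uIcc_of_le (by norm_num : (0:ℝ) ≤ 1)] at this
    · simp
    · intro s hs
      rw [key1 s hs.1 hs.2 (2*σ1^2)]
      refine mul_le_mul_of_nonneg_left ?_ hs.1
      have hσ : σ1^2 ≤ σ2^2 := by nlinarith
      have ea : a^2 / (2*σ1^2) = 2 * σ1^2 * c^2 := by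
        rw [hadef]; field_simp [h1.ne', h2.ne', hc.ne']
      rw [ea, ← hc2', hSdef]
      nlinarith [mul_nonneg (sq_nonneg c) (sub_nonneg.2 hσ)]
    · intro s hs
      rw [key1 (1/2) (by norm_num) le_rfl (2*σ1^2), key2 s hs.1 (2*σ2^2)]
      have ea : a^2 / (2*σ1^2) = 2 * σ1^2 * c^2 := by
        rw [hadef]; field_simp [h1.ne', h2.ne', hc.ne']
      have eb : b^2 / (2*σ2^2) = 2 * σ2^2 * c^2 := by
        rw [hbdef]; field_simp [h1.ne', h2.ne', hc.ne']
      rw [ea, eb]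
      have hfact : 0 ≤ (1 - s) * (c^2 * (σ2^2 - σ1^2)) := by
        apply mul_nonneg (by linarith [hs.2])
        apply mul_nonneg (sq_nonneg c)
        nlinarith
      rw [← hc2', hSdef]
      nlinarith [hfact]
    · show Real.sqrt (S * L) = ∫ r in (0:ℝ)..(1:ℝ), f r
      rw [← intervalIntegral.integral_add_adjacent_intervals (hfi 0 (1/2)) (hfi (1/2) 1),
        keyA, keyB, ← hcS, hadef, hbdef, hSdef]
      ring
  · -- upper bound
    rintro x ⟨φ, g, hcont, h0, hrep, hint, hcon1, hcon2, rfl⟩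
    have hφ1 : φ 1 = ∫ r in (0:ℝ)..1, g r := hrep 1 (by norm_num)
    by_cases hI : IntervalIntegrable g volume 0 1
    · have hsub1 : Set.uIcc (0:ℝ) (1/2) ⊆ Set.uIcc (0:ℝ) 1 := by
        rw [Set.uIcc_of_le (by norm_num : (0:ℝ) ≤ 1/2),
          Set.uIcc_of_le (by norm_num : (0:ℝ) ≤ 1)]
        exact Set.Icc_subset_Icc le_rfl (by norm_num)
      have hsub2 : Set.uIcc (1/2:ℝ) 1 ⊆ Set.uIcc (0:ℝ) 1 := by
        rw [Set.uIcc_of_le (by norm_num : (1/2:ℝ) ≤ 1),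
          Set.uIcc_of_le (by norm_num : (0:ℝ) ≤ 1)]
        exact Set.Icc_subset_Icc (by norm_num) le_rfl
      have hI1 := hI.mono_set hsub1
      have hI2 := hI.mono_set hsub2
      have hQ1 := hint.mono_set hsub1
      have hQ2 := hint.mono_set hsub2
      set A : ℝ := ∫ r in (0:ℝ)..(1/2:ℝ), (g r)^2 with hAdef
      set B : ℝ := ∫ r in (1/2:ℝ)..(1:ℝ), (g r)^2 with hBdef
      clear_value A B
      have hkey : A / (2*σ1^2) + B / (2*σ2^2) ≤ L := by
        have := hcon2 1 ⟨by norm_num, le_rfl⟩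
        rw [intervalIntegral.integral_div, intervalIntegral.integral_div, one_mul] at this
        rw [hAdef, hBdef]
        exact this
      have e1 : (∫ r in (0:ℝ)..(1/2:ℝ), g r) ≤ (1/2) * (a/2) + A / (2*a) := by
        calc (∫ r in (0:ℝ)..(1/2:ℝ), g r)
            ≤ ∫ r in (0:ℝ)..(1/2:ℝ), (a/2 + (g r)^2 / (2*a)) := by
              refine intervalIntegral.integral_mono_on (by norm_num) hI1
                (intervalIntegrable_const.add (hQ1.div_const (2*a))) (fun r _ => ?_)
              have e : a/2 + (g r)^2 / (2*a) = (a^2 + (g r)^2) / (2*a) := by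
                field_simp [ha.ne']
              rw [e, le_div_iff₀ (by linarith : (0:ℝ) < 2*a)]
              nlinarith [sq_nonneg (g r - a)]
          _ = (1/2) * (a/2) + A / (2*a) := by
              rw [intervalIntegral.integral_add intervalIntegrable_const (hQ1.div_const (2*a)),
                intervalIntegral.integral_const, intervalIntegral.integral_div, smul_eq_mul,
                ← hAdef]
              norm_num
      have e2 : (∫ r in (1/2:ℝ)..(1:ℝ), g r) ≤ (1/2) * (b/2) + B / (2*b) := by
        calc (∫ r in (1/2:ℝ)..(1:ℝ), g r)
            ≤ ∫ r in (1/2:ℝ)..(1:ℝ), (b/2 + (g r)^2 / (2*b)) := by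
              refine intervalIntegral.integral_mono_on (by norm_num) hI2
                (intervalIntegrable_const.add (hQ2.div_const (2*b))) (fun r _ => ?_)
              have e : b/2 + (g r)^2 / (2*b) = (b^2 + (g r)^2) / (2*b) := by
                field_simp [hb.ne']
              rw [e, le_div_iff₀ (by linarith : (0:ℝ) < 2*b)]
              nlinarith [sq_nonneg (g r - b)]
          _ = (1/2) * (b/2) + B / (2*b) := by
              rw [intervalIntegral.integral_add intervalIntegrable_const (hQ2.div_const (2*b)),
                intervalIntegral.integral_const, intervalIntegral.integral_div, smul_eq_mul,
                ← hBdef]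
              norm_num
      have hsplit : φ 1 = (∫ r in (0:ℝ)..(1/2:ℝ), g r) + ∫ r in (1/2:ℝ)..(1:ℝ), g r := by
        rw [hφ1, ← intervalIntegral.integral_add_adjacent_intervals hI1 hI2]
      have h5 : A / (2*a) + B / (2*b) ≤ c * S / 2 := by
        have eA : A / (2*a) = (A / (2*σ1^2)) * (1/(2*c)) := by
          rw [hadef, show 2*(2*σ1^2*c) = (2*σ1^2)*(2*c) by ring, ← div_div,
            div_eq_mul_one_div]
        have eB : B / (2*b) = (B / (2*σ2^2)) * (1/(2*c)) := by
          rw [hbdef, show 2*(2*σ2^2*c) = (2*σ2^2)*(2*c) by ring, ← div_div,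
            div_eq_mul_one_div]
        rw [eA, eB]
        calc (A / (2*σ1^2)) * (1/(2*c)) + (B / (2*σ2^2)) * (1/(2*c))
            = (A / (2*σ1^2) + B / (2*σ2^2)) * (1/(2*c)) := by ring
          _ ≤ L * (1/(2*c)) := mul_le_mul_of_nonneg_right hkey (one_div_nonneg.2 (by linarith))
          _ = (c^2 * S) * (1/(2*c)) := by rw [hc2']
          _ = c * S / 2 := by field_simp [hc.ne']
      have hab2 : (1/2) * (a/2) + (1/2) * (b/2) = c * S / 2 := by
        rw [hadef, hbdef, hSdef]; ring
      rw [hsplit, ← hcS]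
      calc (∫ r in (0:ℝ)..(1/2:ℝ), g r) + ∫ r in (1/2:ℝ)..(1:ℝ), g r
          ≤ ((1/2) * (a/2) + A / (2*a)) + ((1/2) * (b/2) + B / (2*b)) := add_le_add e1 e2
        _ ≤ c * S / 2 + c * S / 2 := by linarith
        _ = c * S := by ring
    · rw [intervalIntegral.integral_undef hI] at hφ1
      rw [hφ1]
      exact Real.sqrt_nonneg _
end

section
/- Let 0 < σ₂ < σ₁. The maximum of φ(1) over continuous piecewise-C¹ functions φ:[0,1]→ℝ with φ(0)=0 subject to ∫₀^s (φ'(r))²/(2σ₁²) dr ≤ s·log 2 for 0 ≤ s ≤ 1/2 and ∫₀^{1/2} (φ'(r))²/(2σ₁²) dr + ∫_{1/2}^s (φ'(r))²/(2σ₂²) dr ≤ s·log 2 for 1/2 ≤ s ≤ 1, equals √(2 log 2)·(σ₁+σ₂)/2, achieved by the curve φ(s)=√(2 log 2)σ₁ s on [0,1/2] and φ(s)=√(2 log 2)(σ₁/2 + σ₂(s−1/2)) on [1/2,1]. -/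
open MeasureTheory Real

lemma step_ii (c1 c2 a b : ℝ) :
    IntervalIntegrable (fun r : ℝ => if r ≤ 1/2 then c1 else c2) volume a b := by
  rcases le_total c1 c2 with h | h
  · apply Monotone.intervalIntegrable
    intro x y hxy
    dsimp only
    split_ifs with hx hy hy
    · exact le_rfl
    · exact h
    · exact absurd (hxy.trans hy) hx
    · exact le_rfl
  · apply Antitone.intervalIntegrable
    intro x y hxy
    dsimp only
    split_ifs with hy hx hx
    · exact le_rfl
    · exact absurd (hxy.trans hy) hx
    · exact h
    · exact le_rfl

lemma step_integral0 (c1 c2 s : ℝ) (h0 : 0 ≤ s) (hs : s ≤ 1/2) :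
    (∫ r in (0:ℝ)..s, (if r ≤ 1/2 then c1 else c2)) = c1 * s := by
  rw [intervalIntegral.integral_congr (g := fun _ => c1)
    (fun r hr => by
      rw [Set.uIcc_of_le h0] at hr
      exact if_pos (hr.2.trans hs)),
    intervalIntegral.integral_const, smul_eq_mul]
  ring

lemma step_integral1 (c1 c2 s : ℝ) (hs : 1/2 ≤ s) :
    (∫ r in (1/2:ℝ)..s, (if r ≤ 1/2 then c1 else c2)) = c2 * (s - 1/2) := by
  have hae : ∀ᵐ r ∂volume, r ∈ Set.uIoc (1/2:ℝ) s → (if r ≤ 1/2 then c1 else c2) = c2 := by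
    filter_upwards with r hr
    rw [Set.uIoc_of_le hs] at hr
    exact if_neg (not_le.2 hr.1)
  rw [intervalIntegral.integral_congr_ae hae, intervalIntegral.integral_const, smul_eq_mul]
  ring

lemma ptwise (x c : ℝ) (hc : 0 < c) : x ≤ x^2/(2*c) + c/2 := by
  have h := div_nonneg (sq_nonneg (x - c)) (by positivity : (0:ℝ) ≤ 2*c)
  have e : (x - c)^2/(2*c) = x^2/(2*c) + c/2 - x := by field_simp; ring
  linarith [e ▸ h]

lemma key (σ1 σ2 A B : ℝ) (h2 : 0 < σ2) (h21 : σ2 < σ1)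
    (h1 : A / (2*σ1^2) ≤ 1/2 * Real.log 2)
    (hsum : A/(2*σ1^2) + B/(2*σ2^2) ≤ 1 * Real.log 2) :
    (A/(2*(Real.sqrt (2*Real.log 2)*σ1)) + Real.sqrt (2*Real.log 2)*σ1/4) +
      (B/(2*(Real.sqrt (2*Real.log 2)*σ2)) + Real.sqrt (2*Real.log 2)*σ2/4) ≤
    Real.sqrt (2*Real.log 2) * (σ1+σ2) / 2 := by
  have h1' : 0 < σ1 := h2.trans h21
  have hL : 0 < Real.log 2 := Real.log_pos (by norm_num)
  set K := Real.sqrt (2*Real.log 2) with hK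
  have hKpos : 0 < K := Real.sqrt_pos.2 (by positivity)
  have hK2 : K^2 = 2*Real.log 2 := Real.sq_sqrt (by positivity)
  set u := A/(2*σ1^2) with hu
  set v := B/(2*σ2^2) with hv
  have e1 : A/(2*(K*σ1)) = σ1 * u / K := by
    rw [hu]; field_simp
  have e2 : B/(2*(K*σ2)) = σ2 * v / K := by
    rw [hv]; field_simp
  have key2 : σ1*u + σ2*v ≤ (σ1+σ2) * Real.log 2 / 2 := by nlinarith
  have hlog : Real.log 2 = K^2/2 := by linarith
  calc (A/(2*(K*σ1)) + K*σ1/4) + (B/(2*(K*σ2)) + K*σ2/4)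
      = (σ1*u + σ2*v)/K + K*(σ1+σ2)/4 := by rw [e1, e2]; ring
    _ ≤ ((σ1+σ2) * Real.log 2 / 2)/K + K*(σ1+σ2)/4 := by gcongr
    _ = K * (σ1+σ2) / 2 := by rw [hlog]; field_simp; ring

lemma achiever (σ1 σ2 : ℝ) (h2 : 0 < σ2) (h21 : σ2 < σ1) :
    let φ : ℝ → ℝ := fun s =>
      if s ≤ 1/2 then Real.sqrt (2 * Real.log 2) * σ1 * s
      else Real.sqrt (2 * Real.log 2) * (σ1/2 + σ2 * (s - 1/2));
    let φ' : ℝ → ℝ := fun r =>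
      if r ≤ 1/2 then Real.sqrt (2 * Real.log 2) * σ1 else Real.sqrt (2 * Real.log 2) * σ2;
    ContinuousOn φ (Set.Icc 0 1) ∧
    φ 0 = 0 ∧
    (∀ s ∈ Set.Icc (0:ℝ) 1, φ s = ∫ r in (0:ℝ)..s, φ' r) ∧
    IntervalIntegrable (fun r => (φ' r)^2) volume 0 1 ∧
    (∀ s ∈ Set.Icc (0:ℝ) (1/2),
      (∫ r in (0:ℝ)..s, (φ' r)^2 / (2*σ1^2)) ≤ s * Real.log 2) ∧
    (∀ s ∈ Set.Icc (1/2:ℝ) 1,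
      (∫ r in (0:ℝ)..(1/2:ℝ), (φ' r)^2 / (2*σ1^2)) +
        (∫ r in (1/2:ℝ)..s, (φ' r)^2 / (2*σ2^2)) ≤ s * Real.log 2) ∧
    φ 1 = Real.sqrt (2 * Real.log 2) * (σ1 + σ2) / 2 := by
  intro φ φ'
  have h1' : 0 < σ1 := h2.trans h21
  have hL : 0 < Real.log 2 := Real.log_pos (by norm_num)
  set K := Real.sqrt (2*Real.log 2) with hK
  have hKpos : 0 < K := Real.sqrt_pos.2 (by positivity)
  have hK2 : K^2 = 2*Real.log 2 := Real.sq_sqrt (by positivity)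
  have hsq : ∀ d : ℝ, (fun r : ℝ => (φ' r)^2 / d) =
      fun r : ℝ => if r ≤ 1/2 then (K*σ1)^2/d else (K*σ2)^2/d := by
    intro d; funext r; show (if r ≤ 1/2 then K*σ1 else K*σ2)^2 / d = _
    split_ifs <;> rfl
  have hsq' : (fun r : ℝ => (φ' r)^2) =
      fun r : ℝ => if r ≤ 1/2 then (K*σ1)^2 else (K*σ2)^2 := by
    funext r; show (if r ≤ 1/2 then K*σ1 else K*σ2)^2 = _
    split_ifs <;> rfl
  refine ⟨?_, ?_, ?_, ?_, ?_, ?_, ?_⟩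
  · apply Continuous.continuousOn
    apply Continuous.if_le (by continuity) (by continuity) continuous_id continuous_const
    intro x hx; simp only [id] at hx; rw [hx]; ring
  · show (if (0:ℝ) ≤ 1/2 then K * σ1 * 0 else _) = 0
    rw [if_pos (by norm_num)]; ring
  · intro s hs
    rcases le_or_gt s (1/2) with h | h
    · show (if s ≤ 1/2 then K * σ1 * s else _) = _
      rw [if_pos h, step_integral0 _ _ _ hs.1 h]
    · show (if s ≤ 1/2 then _ else K * (σ1/2 + σ2 * (s - 1/2))) = _
      rw [if_neg (not_le.2 h),
        ← intervalIntegral.integral_add_adjacent_intervals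
          (step_ii (K*σ1) (K*σ2) 0 (1/2)) (step_ii (K*σ1) (K*σ2) (1/2) s),
        step_integral0 _ _ _ (by norm_num) le_rfl, step_integral1 _ _ _ h.le]
      ring
  · rw [hsq']; exact step_ii _ _ _ _
  · intro s hs
    rw [hsq, step_integral0 _ _ _ hs.1 hs.2]
    have : (K*σ1)^2/(2*σ1^2) = Real.log 2 := by
      rw [mul_pow, hK2]; field_simp
    rw [this]; linarith
  · intro s hs
    rw [hsq (2*σ1^2), hsq (2*σ2^2), step_integral0 _ _ _ (by norm_num) le_rfl,
      step_integral1 _ _ _ hs.1]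
    have e1 : (K*σ1)^2/(2*σ1^2) = Real.log 2 := by rw [mul_pow, hK2]; field_simp
    have e2 : (K*σ2)^2/(2*σ2^2) = Real.log 2 := by rw [mul_pow, hK2]; field_simp
    rw [e1, e2]; nlinarith
  · show (if (1:ℝ) ≤ 1/2 then _ else K * (σ1/2 + σ2 * ((1:ℝ) - 1/2))) = _
    rw [if_neg (by norm_num)]; ring

/-- With decreasing variances 0 < σ₂ < σ₁, the maximum of φ(1) over
absolutely continuous φ on [0,1] with φ(0)=0 subject to the large-deviation
constraints equals √(2 log 2)(σ₁+σ₂)/2, achieved by the explicit piecewise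
linear curve. -/
theorem stmt1 (σ1 σ2 : ℝ) (h2 : 0 < σ2) (h21 : σ2 < σ1) :
    IsGreatest
      {x : ℝ | ∃ φ φ' : ℝ → ℝ,
        ContinuousOn φ (Set.Icc 0 1) ∧
        φ 0 = 0 ∧
        (∀ s ∈ Set.Icc (0:ℝ) 1, φ s = ∫ r in (0:ℝ)..s, φ' r) ∧
        IntervalIntegrable (fun r => (φ' r)^2) volume 0 1 ∧
        (∀ s ∈ Set.Icc (0:ℝ) (1/2),
          (∫ r in (0:ℝ)..s, (φ' r)^2 / (2*σ1^2)) ≤ s * Real.log 2) ∧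
        (∀ s ∈ Set.Icc (1/2:ℝ) 1,
          (∫ r in (0:ℝ)..(1/2:ℝ), (φ' r)^2 / (2*σ1^2)) +
            (∫ r in (1/2:ℝ)..s, (φ' r)^2 / (2*σ2^2)) ≤ s * Real.log 2) ∧
        x = φ 1}
      (Real.sqrt (2 * Real.log 2) * (σ1 + σ2) / 2) ∧
    (∃ φ' : ℝ → ℝ,
      let φ : ℝ → ℝ := fun s =>
        if s ≤ 1/2 then Real.sqrt (2 * Real.log 2) * σ1 * s
        else Real.sqrt (2 * Real.log 2) * (σ1/2 + σ2 * (s - 1/2));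
      ContinuousOn φ (Set.Icc 0 1) ∧
      φ 0 = 0 ∧
      (∀ s ∈ Set.Icc (0:ℝ) 1, φ s = ∫ r in (0:ℝ)..s, φ' r) ∧
      IntervalIntegrable (fun r => (φ' r)^2) volume 0 1 ∧
      (∀ s ∈ Set.Icc (0:ℝ) (1/2),
        (∫ r in (0:ℝ)..s, (φ' r)^2 / (2*σ1^2)) ≤ s * Real.log 2) ∧
      (∀ s ∈ Set.Icc (1/2:ℝ) 1,
        (∫ r in (0:ℝ)..(1/2:ℝ), (φ' r)^2 / (2*σ1^2)) +
          (∫ r in (1/2:ℝ)..s, (φ' r)^2 / (2*σ2^2)) ≤ s * Real.log 2) ∧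
      φ 1 = Real.sqrt (2 * Real.log 2) * (σ1 + σ2) / 2) := by
  have h1' : 0 < σ1 := h2.trans h21
  have hL : 0 < Real.log 2 := Real.log_pos (by norm_num)
  have hKpos : 0 < Real.sqrt (2 * Real.log 2) := Real.sqrt_pos.2 (by positivity)
  obtain ⟨hc, h0, h3, h4, h5, h6, h7⟩ := achiever σ1 σ2 h2 h21
  constructor
  · constructor
    · exact ⟨_, _, hc, h0, h3, h4, h5, h6, h7.symm⟩
    · rintro x ⟨φ, φ', hc', h0', h3', h4', h5', h6', rfl⟩
      by_cases hii : IntervalIntegrable φ' volume 0 1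
      · have hsub1 : Set.uIcc (0:ℝ) (1/2) ⊆ Set.uIcc (0:ℝ) 1 := by
          rw [Set.uIcc_of_le (by norm_num : (0:ℝ) ≤ 1/2),
            Set.uIcc_of_le (by norm_num : (0:ℝ) ≤ 1)]
          exact Set.Icc_subset_Icc le_rfl (by norm_num)
        have hsub2 : Set.uIcc (1/2:ℝ) 1 ⊆ Set.uIcc (0:ℝ) 1 := by
          rw [Set.uIcc_of_le (by norm_num : (1/2:ℝ) ≤ 1),
            Set.uIcc_of_le (by norm_num : (0:ℝ) ≤ 1)]
          exact Set.Icc_subset_Icc (by norm_num) le_rfl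
        have hii1 := hii.mono_set hsub1
        have hii2 := hii.mono_set hsub2
        have h41 := h4'.mono_set hsub1
        have h42 := h4'.mono_set hsub2
        set A := ∫ r in (0:ℝ)..(1/2:ℝ), (φ' r)^2 with hA
        set B := ∫ r in (1/2:ℝ)..(1:ℝ), (φ' r)^2 with hB
        have hA5 : A / (2*σ1^2) ≤ 1/2 * Real.log 2 := by
          rw [hA, ← intervalIntegral.integral_div]
          exact h5' (1/2) ⟨by norm_num, le_rfl⟩
        have hAB : A/(2*σ1^2) + B/(2*σ2^2) ≤ 1 * Real.log 2 := by
          rw [hA, hB, ← intervalIntegral.integral_div, ← intervalIntegral.integral_div]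
          exact h6' 1 ⟨by norm_num, le_rfl⟩
        have b1 : (∫ r in (0:ℝ)..(1/2:ℝ), φ' r) ≤
            A/(2*(Real.sqrt (2*Real.log 2)*σ1)) + Real.sqrt (2*Real.log 2)*σ1/4 := by
          set c := Real.sqrt (2*Real.log 2)*σ1 with hcdef
          have hcpos : 0 < c := by positivity
          calc (∫ r in (0:ℝ)..(1/2:ℝ), φ' r)
              ≤ ∫ r in (0:ℝ)..(1/2:ℝ), ((φ' r)^2/(2*c) + c/2) :=
                intervalIntegral.integral_mono_on (by norm_num) hii1
                  ((h41.div_const _).add intervalIntegrable_const)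
                  (fun r _ => ptwise _ _ hcpos)
            _ = A/(2*c) + c/4 := by
                rw [intervalIntegral.integral_add (h41.div_const _) intervalIntegrable_const,
                  intervalIntegral.integral_div, intervalIntegral.integral_const, smul_eq_mul]
                rw [hA]; ring
        have b2 : (∫ r in (1/2:ℝ)..(1:ℝ), φ' r) ≤
            B/(2*(Real.sqrt (2*Real.log 2)*σ2)) + Real.sqrt (2*Real.log 2)*σ2/4 := by
          set c := Real.sqrt (2*Real.log 2)*σ2 with hcdef
          have hcpos : 0 < c := by positivity
          calc (∫ r in (1/2:ℝ)..(1:ℝ), φ' r)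
              ≤ ∫ r in (1/2:ℝ)..(1:ℝ), ((φ' r)^2/(2*c) + c/2) :=
                intervalIntegral.integral_mono_on (by norm_num) hii2
                  ((h42.div_const _).add intervalIntegrable_const)
                  (fun r _ => ptwise _ _ hcpos)
            _ = B/(2*c) + c/4 := by
                rw [intervalIntegral.integral_add (h42.div_const _) intervalIntegrable_const,
                  intervalIntegral.integral_div, intervalIntegral.integral_const, smul_eq_mul]
                rw [hB]; ring
        have hφ1 : φ 1 = (∫ r in (0:ℝ)..(1/2:ℝ), φ' r) + ∫ r in (1/2:ℝ)..(1:ℝ), φ' r := by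
          rw [h3' 1 ⟨by norm_num, le_rfl⟩,
            ← intervalIntegral.integral_add_adjacent_intervals hii1 hii2]
        rw [hφ1]
        exact le_trans (add_le_add b1 b2) (key σ1 σ2 A B h2 h21 hA5 hAB)
      · have : φ 1 = 0 := by
          rw [h3' 1 ⟨by norm_num, le_rfl⟩, intervalIntegral.integral_undef hii]
        rw [this]; positivity
  · exact ⟨_, hc, h0, h3, h4, h5, h6, h7⟩
end

section
/- For positive reals σ₁, σ₂, the maximum of b over pairs (a,b) of reals satisfying a²/σ₁² ≤ (1/2)·log 2 and a²/σ₁² + (b−a)²/σ₂² ≤ log 2 equals √((σ₁²+σ₂²)·log 2) when σ₁ ≤ σ₂, and equals √(2 log 2)·(σ₁+σ₂)/2 when σ₁ ≥ σ₂. -/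
set_option maxHeartbeats 1000000 in
/-- the reduced finite-dimensional optimization problem. -/
theorem stmt2 (σ1 σ2 : ℝ) (h1 : 0 < σ1) (h2 : 0 < σ2) :
    (σ1 ≤ σ2 →
      IsGreatest
        {b : ℝ | ∃ a : ℝ, a^2/σ1^2 ≤ (1/2) * Real.log 2 ∧
          a^2/σ1^2 + (b-a)^2/σ2^2 ≤ Real.log 2}
        (Real.sqrt ((σ1^2 + σ2^2) * Real.log 2))) ∧
    (σ2 ≤ σ1 →
      IsGreatest
        {b : ℝ | ∃ a : ℝ, a^2/σ1^2 ≤ (1/2) * Real.log 2 ∧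
          a^2/σ1^2 + (b-a)^2/σ2^2 ≤ Real.log 2}
        (Real.sqrt (2 * Real.log 2) * (σ1 + σ2) / 2)) := by
  have hL : 0 < Real.log 2 := Real.log_pos one_lt_two
  set L := Real.log 2 with hLdef
  clear_value L
  have hs1 : (0:ℝ) < σ1^2 := by positivity
  have hs2 : (0:ℝ) < σ2^2 := by positivity
  constructor
  · -- case σ1 ≤ σ2
    intro hσ
    have hS : (0:ℝ) < σ1^2 + σ2^2 := by positivity
    obtain ⟨c, hc0, hc2'⟩ : ∃ c : ℝ, 0 ≤ c ∧ c^2 * (σ1^2 + σ2^2) = L := by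
      refine ⟨Real.sqrt (L / (σ1^2 + σ2^2)), Real.sqrt_nonneg _, ?_⟩
      rw [Real.sq_sqrt (by positivity)]; field_simp
    have hbval : Real.sqrt ((σ1^2 + σ2^2) * L) = (σ1^2 + σ2^2) * c := by
      rw [show (σ1^2 + σ2^2) * L = ((σ1^2 + σ2^2) * c)^2 by nlinarith]
      exact Real.sqrt_sq (by positivity)
    constructor
    · -- membership
      refine ⟨σ1^2 * c, ?_, ?_⟩
      · rw [show (σ1^2 * c)^2 / σ1^2 = σ1^2 * c^2 by field_simp]
        nlinarith [mul_nonneg (by nlinarith : (0:ℝ) ≤ σ2^2 - σ1^2) (sq_nonneg c)]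
      · rw [hbval]
        have e1 : (σ1^2 * c)^2 / σ1^2 = σ1^2 * c^2 := by field_simp
        have e2 : ((σ1^2 + σ2^2) * c - σ1^2 * c)^2 / σ2^2 = σ2^2 * c^2 := by
          field_simp; ring
        rw [e1, e2]
        nlinarith
    · -- upper bound
      rintro b ⟨a, _, hcon⟩
      have h' : a^2 * σ2^2 + (b-a)^2 * σ1^2 ≤ L * (σ1^2 * σ2^2) := by
        rw [div_add_div _ _ (ne_of_gt hs1) (ne_of_gt hs2),
          div_le_iff₀ (by positivity)] at hcon
        nlinarith [hcon]
      have hb2 : b^2 ≤ (σ1^2 + σ2^2) * L := by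
        have key : b^2 * (σ1^2 * σ2^2) ≤ (σ1^2 + σ2^2) * (a^2 * σ2^2 + (b-a)^2 * σ1^2) := by
          nlinarith [sq_nonneg (σ2^2 * a - σ1^2 * (b-a))]
        nlinarith [mul_le_mul_of_nonneg_left h' (le_of_lt hS), mul_pos hs1 hs2]
      calc b ≤ |b| := le_abs_self b
        _ = Real.sqrt (b^2) := (Real.sqrt_sq_eq_abs b).symm
        _ ≤ Real.sqrt ((σ1^2 + σ2^2) * L) := Real.sqrt_le_sqrt hb2
  · -- case σ2 ≤ σ1
    intro hσ
    obtain ⟨s, hs0, hs2'⟩ : ∃ s : ℝ, 0 ≤ s ∧ s^2 = L / 2 :=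
      ⟨Real.sqrt (L / 2), Real.sqrt_nonneg _, Real.sq_sqrt (by positivity)⟩
    have hbval : Real.sqrt (2 * L) * (σ1 + σ2) / 2 = (σ1 + σ2) * s := by
      rw [show 2 * L = (2 * s)^2 by nlinarith]
      rw [Real.sqrt_sq (by positivity)]
      ring
    constructor
    · refine ⟨σ1 * s, ?_, ?_⟩
      · rw [show (σ1 * s)^2 / σ1^2 = s^2 by field_simp]
        nlinarith
      · rw [hbval]
        have e1 : (σ1 * s)^2 / σ1^2 = s^2 := by field_simp
        have e2 : ((σ1 + σ2) * s - σ1 * s)^2 / σ2^2 = s^2 := by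
          field_simp; ring
        rw [e1, e2]
        nlinarith
    · rintro b ⟨a, hcon1, hcon2⟩
      rw [hbval]
      have ha2 : a^2 ≤ σ1^2 * s^2 := by
        rw [div_le_iff₀ hs1] at hcon1
        nlinarith
      have ha : a ≤ σ1 * s := by
        nlinarith [mul_nonneg h1.le hs0, sq_nonneg (a - σ1 * s)]
      have hcon2' : a^2/σ1^2 + (b-a)^2/σ2^2 ≤ 2 * s^2 := by
        rw [hs2']; linarith
      have h' : a^2 * σ2^2 + (b-a)^2 * σ1^2 ≤ 2 * s^2 * (σ1^2 * σ2^2) := by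
        rw [div_add_div _ _ (ne_of_gt hs1) (ne_of_gt hs2),
          div_le_iff₀ (by positivity)] at hcon2'
        nlinarith [hcon2']
      by_contra hb
      push_neg at hb
      -- key algebraic fact: σ1²((σ1+σ2)s−a)² + σ2²a² − 2s²σ1²σ2² = t·B ≥ 0
      have hB : 0 ≤ σ1^2 * (σ1*s - a) + 2*σ1^2*σ2*s - σ2^2*σ1*s - σ2^2*a := by
        nlinarith [mul_nonneg (mul_nonneg (mul_nonneg h1.le h2.le) hs0)
          (sub_nonneg.2 hσ)]
      have hE : 0 ≤ σ1^2 * ((σ1+σ2)*s - a)^2 + σ2^2*a^2 - 2*s^2*σ1^2*σ2^2 := by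
        nlinarith [mul_nonneg (sub_nonneg.2 ha) hB]
      have hX : 0 ≤ (σ1+σ2)*s - a := by
        nlinarith [mul_nonneg h2.le hs0]
      have h3 : 0 < b - (σ1+σ2)*s := by linarith
      have h4 : 0 < (b-a) + ((σ1+σ2)*s - a) := by nlinarith [mul_nonneg h2.le hs0]
      have hprod : 0 < (b-a)^2 - ((σ1+σ2)*s - a)^2 := by nlinarith [mul_pos h3 h4]
      nlinarith [mul_pos hs1 hprod, hE, h']
end

section
/- With the setup of the previous statement, for k ≤ n/2 the variance of S_n(k) − s_{k,n}(S_n) equals k σ₁² ((σ₁²+σ₂²)n − 2σ₁² k)/((σ₁²+σ₂²)n), and for n/2 ≤ k ≤ n it equals (n−k) σ₂² ((σ₁²+σ₂²)n − 2σ₂²(n−k))/((σ₁²+σ₂²)n). -/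
/-!
Write `V j` for the variance of the partial sum `S j`. Splitting `S k - c • S n` into the
independent pieces `(1 - c) • S k` and `-c • (S n - S k)` gives the variance
`(1 - c)² V k + c² (V n - V k)`. The interpolation coefficient of the statement is exactly
`c = V k / V n`, which turns this into the bridge variance `V k (V n - V k) / V n`; finally
`V k` is piecewise linear in `k`, with slope `σ₁²` up to `m` and `σ₂²` after.
-/

open MeasureTheory ProbabilityTheory Finset

section GaussianLaw

variable {Ω : Type*} [MeasurableSpace Ω] {μ : Measure Ω} {X : Ω → ℝ} {a : ℝ} {v : NNReal}

lemma memLp_two_of_map_eq_gaussianReal (hX : AEMeasurable X μ)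
    (hlaw : μ.map X = gaussianReal a v) : MemLp X 2 μ :=
  (hlaw ▸ memLp_id_gaussianReal 2 : MemLp id 2 (μ.map X)).comp_of_map hX

lemma variance_of_map_eq_gaussianReal (hX : AEMeasurable X μ)
    (hlaw : μ.map X = gaussianReal a v) : Var[X; μ] = v := by
  rw [← variance_id_map hX, hlaw, variance_id_gaussianReal]

end GaussianLaw

section PartialSums

variable {M : Type*} [AddCommMonoid M] (x y : M) {k m : ℕ}

lemma sum_range_ite_lt_of_le (h : k ≤ m) :
    ∑ i ∈ range k, (if i < m then x else y) = k • x := by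
  rw [sum_congr rfl fun i hi => if_pos ((mem_range.mp hi).trans_le h), sum_const, card_range]

lemma sum_range_ite_lt_of_ge (h : m ≤ k) :
    ∑ i ∈ range k, (if i < m then x else y) = m • x + (k - m) • y := by
  rw [← sum_range_add_sum_Ico _ h, sum_range_ite_lt_of_le x y le_rfl,
    sum_congr rfl fun i hi => if_neg (mem_Ico.mp hi).1.not_gt, sum_const, Nat.card_Ico]

lemma sum_range_ite_lt {R : Type*} [CommRing R] (a b : R) (k m : ℕ) :
    ∑ i ∈ range k, (if i < m then a else b)
      = if k ≤ m then a * k else a * m + b * ((k : R) - m) := by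
  split_ifs with hkm
  · rw [sum_range_ite_lt_of_le _ _ hkm, nsmul_eq_mul, mul_comm]
  · rw [sum_range_ite_lt_of_ge _ _ (le_of_not_ge hkm), nsmul_eq_mul, nsmul_eq_mul,
      Nat.cast_sub (le_of_not_ge hkm)]
    ring

end PartialSums

section Bridge

variable {Ω : Type*} [MeasurableSpace Ω] {μ : Measure Ω} {ξ : ℕ → Ω → ℝ} {k n : ℕ}

lemma ProbabilityTheory.iIndepFun.variance_sum_smul {ι : Type*} {X : ι → Ω → ℝ} (hindep : iIndepFun X μ)
    {s : Finset ι} (hL2 : ∀ i ∈ s, MemLp (X i) 2 μ) (c : ι → ℝ) :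
    Var[∑ i ∈ s, c i • X i; μ] = ∑ i ∈ s, c i ^ 2 * Var[X i; μ] := by
  rw [IndepFun.variance_sum (fun i hi => (hL2 i hi).const_smul _)
    fun i _ j _ hij => (hindep.indepFun hij).comp (measurable_const_smul _)
      (measurable_const_smul _)]
  simp only [variance_smul]

lemma variance_partialSum_sub_mul_sum (hindep : iIndepFun ξ μ)
    (hL2 : ∀ i < n, MemLp (ξ i) 2 μ) (hk : k ≤ n) (c : ℝ) :
    Var[fun ω => ∑ i ∈ range k, ξ i ω - c * ∑ i ∈ range n, ξ i ω; μ]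
      = (1 - c) ^ 2 * ∑ i ∈ range k, Var[ξ i; μ]
        + c ^ 2 * ∑ i ∈ Ico k n, Var[ξ i; μ] := by
  have hsum : (fun ω => ∑ i ∈ range k, ξ i ω - c * ∑ i ∈ range n, ξ i ω)
      = ∑ i ∈ range n, (if i < k then 1 - c else -c) • ξ i := by
    ext ω
    have hterm : ∀ i, (if i < k then 1 - c else -c) * ξ i ω
        = (if i ∈ range k then ξ i ω else 0) - c * ξ i ω := by
      intro i
      by_cases hi : i < k <;> simp [hi]
      ring
    simp only [Finset.sum_apply, Pi.smul_apply, smul_eq_mul, hterm, sum_sub_distrib, sum_ite_mem,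
      inter_eq_right.mpr (range_subset_range.mpr hk), mul_sum]
  rw [hsum, hindep.variance_sum_smul (fun i hi => hL2 i (mem_range.mp hi)),
    ← sum_range_add_sum_Ico _ hk, mul_sum, mul_sum]
  congr 1
  · exact sum_congr rfl fun i hi => by rw [if_pos (mem_range.mp hi)]
  · exact sum_congr rfl fun i hi => by rw [if_neg (mem_Ico.mp hi).1.not_gt, neg_sq]

lemma variance_partialSum_sub_bridge (hindep : iIndepFun ξ μ)
    (hL2 : ∀ i < n, MemLp (ξ i) 2 μ) (hk : k ≤ n) :
    Var[fun ω => ∑ i ∈ range k, ξ i ω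
        - (∑ i ∈ range k, Var[ξ i; μ]) / (∑ i ∈ range n, Var[ξ i; μ]) * ∑ i ∈ range n, ξ i ω; μ]
      = (∑ i ∈ range k, Var[ξ i; μ]) * (∑ i ∈ range n, Var[ξ i; μ] - ∑ i ∈ range k, Var[ξ i; μ])
        / ∑ i ∈ range n, Var[ξ i; μ] := by
  rw [variance_partialSum_sub_mul_sum hindep hL2 hk, sum_Ico_eq_sub _ hk]
  set A := ∑ i ∈ range k, Var[ξ i; μ]
  set B := ∑ i ∈ range n, Var[ξ i; μ]
  -- for `B = 0` the coefficient `A / B` is the junk value `0`, but then `A = 0` as well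
  rcases eq_or_ne B 0 with hB | hB
  · have hAB : A ≤ B := sum_le_sum_of_subset_of_nonneg (range_subset_range.mpr hk)
      fun _ _ _ => variance_nonneg _ _
    have hA : A = 0 := le_antisymm (hB ▸ hAB) (sum_nonneg fun _ _ => variance_nonneg _ _)
    simp [hA, hB]
  · field_simp
    ring

end Bridge

theorem stmt5_general (σ1 σ2 : ℝ)
    {Ω : Type*} [MeasurableSpace Ω] (μ : Measure Ω) (m : ℕ)
    (ξ : ℕ → Ω → ℝ) (hmeas : ∀ i, Measurable (ξ i))
    (hindep : iIndepFun ξ μ)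
    (hX : ∀ i < m, Measure.map (ξ i) μ = gaussianReal 0 (Real.toNNReal (σ1^2)))
    (hY : ∀ i, m ≤ i → i < 2*m →
      Measure.map (ξ i) μ = gaussianReal 0 (Real.toNNReal (σ2^2))) :
    ∀ k ≤ 2*m,
      variance
        (fun ω => (∑ i ∈ Finset.range k, ξ i ω) -
          (if k ≤ m then σ1^2*(k:ℝ)/((σ1^2 + σ2^2)*m)
           else (σ1^2*(m:ℝ) + σ2^2*((k:ℝ) - m))/((σ1^2 + σ2^2)*m)) *
          (∑ i ∈ Finset.range (2*m), ξ i ω)) μ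
      = if k ≤ m then
          (k:ℝ)*σ1^2*((σ1^2 + σ2^2)*(2*(m:ℝ)) - 2*σ1^2*(k:ℝ))
            /((σ1^2 + σ2^2)*(2*(m:ℝ)))
        else
          (2*(m:ℝ) - (k:ℝ))*σ2^2*((σ1^2 + σ2^2)*(2*(m:ℝ)) - 2*σ2^2*(2*(m:ℝ) - (k:ℝ)))
            /((σ1^2 + σ2^2)*(2*(m:ℝ))) := by
  intro k hk
  set v : ℕ → ℝ := fun i => if i < m then σ1 ^ 2 else σ2 ^ 2
  have hlaw : ∀ i < 2 * m, μ.map (ξ i) = gaussianReal 0 (v i).toNNReal := by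
    intro i hi
    by_cases him : i < m
    · simp [v, him, hX i him]
    · simp [v, him, hY i (not_lt.mp him) hi]
  have hL2 : ∀ i < 2 * m, MemLp (ξ i) 2 μ := fun i hi =>
    memLp_two_of_map_eq_gaussianReal (hmeas i).aemeasurable (hlaw i hi)
  have hV : ∀ j ≤ 2 * m, ∑ i ∈ range j, Var[ξ i; μ] = ∑ i ∈ range j, v i := by
    refine fun j hj => sum_congr rfl fun i hi => ?_
    rw [variance_of_map_eq_gaussianReal (hmeas i).aemeasurable
      (hlaw i ((mem_range.mp hi).trans_le hj)), Real.coe_toNNReal _ (by positivity)]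
  have hVn : ∑ i ∈ range (2 * m), Var[ξ i; μ] = (σ1 ^ 2 + σ2 ^ 2) * m := by
    rw [hV _ le_rfl, sum_range_ite_lt_of_ge _ _ (by omega : m ≤ 2 * m), two_mul,
      Nat.add_sub_cancel, nsmul_eq_mul, nsmul_eq_mul]
    ring
  have hVk : ∑ i ∈ range k, Var[ξ i; μ]
      = if k ≤ m then σ1 ^ 2 * k else σ1 ^ 2 * m + σ2 ^ 2 * ((k : ℝ) - m) := by
    rw [hV k hk, sum_range_ite_lt]
  have hC : (if k ≤ m then σ1^2*(k:ℝ)/((σ1^2 + σ2^2)*m)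
      else (σ1^2*(m:ℝ) + σ2^2*((k:ℝ) - m))/((σ1^2 + σ2^2)*m))
      = (∑ i ∈ range k, Var[ξ i; μ]) / ∑ i ∈ range (2 * m), Var[ξ i; μ] := by
    rw [hVk, hVn, ite_div]
  rw [hC, variance_partialSum_sub_bridge hindep hL2 hk, hVk, hVn]
  split_ifs <;> rw [← mul_div_mul_left _ _ two_ne_zero] <;> congr 1 <;> ring

/-- the variance of S_n(k) - s_{k,n}(S_n) for the inhomogeneous
Gaussian walk (n = 2m). -/
theorem stmt5 (σ1 σ2 : ℝ) (h1 : 0 < σ1) (h2 : 0 < σ2)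
    {Ω : Type*} [MeasurableSpace Ω] (μ : Measure Ω) [IsProbabilityMeasure μ]
    (m : ℕ) (hm : 1 ≤ m)
    (ξ : ℕ → Ω → ℝ) (hmeas : ∀ i, Measurable (ξ i))
    (hindep : iIndepFun ξ μ)
    (hX : ∀ i < m, Measure.map (ξ i) μ = gaussianReal 0 (Real.toNNReal (σ1^2)))
    (hY : ∀ i, m ≤ i → i < 2*m →
      Measure.map (ξ i) μ = gaussianReal 0 (Real.toNNReal (σ2^2))) :
    ∀ k ≤ 2*m,
      variance
        (fun ω => (∑ i ∈ Finset.range k, ξ i ω) -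
          (if k ≤ m then σ1^2*(k:ℝ)/((σ1^2 + σ2^2)*m)
           else (σ1^2*(m:ℝ) + σ2^2*((k:ℝ) - m))/((σ1^2 + σ2^2)*m)) *
          (∑ i ∈ Finset.range (2*m), ξ i ω)) μ
      = if k ≤ m then
          (k:ℝ)*σ1^2*((σ1^2 + σ2^2)*(2*(m:ℝ)) - 2*σ1^2*(k:ℝ))
            /((σ1^2 + σ2^2)*(2*(m:ℝ)))
        else
          (2*(m:ℝ) - (k:ℝ))*σ2^2*((σ1^2 + σ2^2)*(2*(m:ℝ)) - 2*σ2^2*(2*(m:ℝ) - (k:ℝ)))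
            /((σ1^2 + σ2^2)*(2*(m:ℝ))) :=
  stmt5_general σ1 σ2 μ m ξ hmeas hindep hX hY
end

section
/- Let S_n = Σ_{i=1}^{n/2} X_i + Σ_{i=n/2+1}^n Y_i with X_i i.i.d. N(0,σ₁²) and Y_i i.i.d. N(0,σ₂²) independent, 0 < σ₁ < σ₂, n even. Set a_n = √((σ₁²+σ₂²) log 2)·n − (√(σ₁²+σ₂²)/(4√(log 2)))·log n. Then there exist constants c₂, c₃ > 0 independent of n such that for all y ≥ 0, 2^n · P(S_n ≥ a_n + y) ≤ c₂ e^{−c₃ y}. -/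
/-!
With `s = σ₁² + σ₂²`, `S_n` is a centred Gaussian of variance `v = s n / 2`, and
`a_n = α n - β log n` with `α² = s log 2`, `α β = s / 4`, `β < α` (as `log 2 > 1/4`).
Mills' bound `P(S_n ≥ t) ≤ √(v / 2π) t⁻¹ e^{-t²/2v}` at `t = a_n + y ≥ (α - β) n` gives a
prefactor `O(n^{-1/2})`, while `t² / 2v ≥ n log 2 - ½ log n + 2 (α - β) y / s`: the first term
cancels `2^n`, the second the prefactor, and the third is the exponential decay in `y`.
-/

open MeasureTheory ProbabilityTheory Filter Set Real
open scoped NNReal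

lemma integral_Ioi_mul_exp_neg_mul_sq {b : ℝ} (hb : 0 < b) (t : ℝ) :
    ∫ x in Ioi t, x * exp (-b * x ^ 2) = exp (-b * t ^ 2) / (2 * b) := by
  have hderiv : ∀ x ∈ Ici t,
      HasDerivAt (fun x ↦ -exp (-b * x ^ 2) / (2 * b)) (x * exp (-b * x ^ 2)) x := by
    intro x _
    have h := (((hasDerivAt_pow 2 x).const_mul (-b)).exp.neg).div_const (2 * b)
    refine h.congr_deriv ?_
    field_simp
    ring
  have hlim : Tendsto (fun x ↦ -exp (-b * x ^ 2) / (2 * b)) atTop (nhds 0) := by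
    have h0 : Tendsto (fun x ↦ exp (-b * x ^ 2)) atTop (nhds 0) :=
      (exp_neg_mul_sq_isLittleO_exp_neg hb).isBigO.trans_tendsto tendsto_exp_neg_atTop_nhds_zero
    simpa using h0.neg.div_const (2 * b)
  rw [integral_Ioi_of_hasDerivAt_of_tendsto' hderiv
    (integrable_mul_exp_neg_mul_sq hb).integrableOn hlim]
  ring

lemma gaussianReal_Ici_toReal_le {v : ℝ≥0} (hv : v ≠ 0) {t : ℝ} (ht : 0 < t) :
    (gaussianReal 0 v (Ici t)).toReal ≤ √(v / (2 * π)) / t * exp (-t ^ 2 / (2 * v)) := by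
  have hv0 : (0 : ℝ) < v := by positivity
  set c := (√(2 * π * v))⁻¹
  set b := (2 * (v : ℝ))⁻¹
  have hb : 0 < b := by positivity
  have hpdf : gaussianPDFReal 0 v = fun x ↦ c * exp (-b * x ^ 2) := by
    ext x
    simp only [gaussianPDFReal_def, sub_zero, c, b]
    ring_nf
  rw [gaussianReal_apply_eq_integral 0 hv,
    ENNReal.toReal_ofReal (integral_nonneg fun x ↦ gaussianPDFReal_nonneg _ _ _)]
  calc ∫ x in Ici t, gaussianPDFReal 0 v x
      ≤ ∫ x in Ici t, c / t * (x * exp (-b * x ^ 2)) := by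
        refine setIntegral_mono_on (integrable_gaussianPDFReal _ _).integrableOn
          ((integrable_mul_exp_neg_mul_sq hb).const_mul _).integrableOn measurableSet_Ici ?_
        intro x (hx : t ≤ x)
        rw [hpdf]
        have : 1 ≤ x / t := (one_le_div ht).mpr hx
        calc c * exp (-b * x ^ 2) ≤ x / t * (c * exp (-b * x ^ 2)) :=
              le_mul_of_one_le_left (by positivity) this
          _ = _ := by ring
    _ = c / t * (exp (-b * t ^ 2) / (2 * b)) := by
        rw [integral_Ici_eq_integral_Ioi, integral_const_mul, integral_Ioi_mul_exp_neg_mul_sq hb]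
    _ = √(v / (2 * π)) / t * exp (-t ^ 2 / (2 * v)) := by
        have hsq : √(v / (2 * π)) = v * c := by
          rw [show (v : ℝ) / (2 * π) = v ^ 2 / (2 * π * v) by field_simp, sqrt_div (sq_nonneg _),
            sqrt_sq hv0.le]
          rfl
        rw [hsq]
        simp only [b]
        field_simp

lemma sq_threshold_ge {s L α β N ℓ y : ℝ} (hα : α ^ 2 = s * L) (hαβ : α * β = s / 4)
    (hβ : 0 ≤ β) (hℓ : ℓ ≤ N) (hy : 0 ≤ y) :
    s * N * (L * N - ℓ / 2) + 2 * (α - β) * N * y ≤ (α * N - β * ℓ + y) ^ 2 := by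
  have hexpand : (α * N - β * ℓ + y) ^ 2 - (s * N * (L * N - ℓ / 2) + 2 * (α - β) * N * y)
      = (β * ℓ) ^ 2 + 2 * y * β * (N - ℓ) + y ^ 2 := by
    linear_combination N ^ 2 * hα - 2 * N * ℓ * hαβ
  nlinarith [mul_nonneg (mul_nonneg hy hβ) (sub_nonneg.2 hℓ), sq_nonneg (β * ℓ), sq_nonneg y]

lemma exp_neg_threshold_sq_le {s α β : ℝ} (hs : 0 < s) (hα : α ^ 2 = s * log 2)
    (hαβ : α * β = s / 4) (hβ : 0 ≤ β) {n : ℕ} (hn : 1 ≤ n) {y : ℝ} (hy : 0 ≤ y) :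
    exp (-(α * n - β * log n + y) ^ 2 / (2 * (s * n / 2)))
      ≤ √n / 2 ^ n * exp (-(2 * (α - β) / s) * y) := by
  have hN : (0 : ℝ) < n := by exact_mod_cast hn
  have hsq := sq_threshold_ge hα hαβ hβ (log_le_self hN.le) hy
  have hsqrt : √(n : ℝ) = exp (log n / 2) := by
    rw [← exp_log (sqrt_pos.mpr hN), log_sqrt hN.le]
  have hpow : (2 : ℝ) ^ n = exp (n * log 2) := by
    rw [exp_nat_mul, exp_log two_pos]
  rw [hsqrt, hpow, ← exp_sub, ← exp_add, exp_le_exp, div_le_iff₀ (by positivity)]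
  have hrhs : (log n / 2 - n * log 2 + -(2 * (α - β) / s) * y) * (2 * (s * n / 2))
      = -(s * n * (log 2 * n - log n / 2) + 2 * (α - β) * n * y) := by
    field_simp
    ring
  linarith

lemma two_pow_mul_gaussianReal_tail_le {s α β : ℝ} (hs : 0 < s) (hα : α ^ 2 = s * log 2)
    (hαβ : α * β = s / 4) (hβ : 0 ≤ β) (hβα : β < α) {n : ℕ} (hn : 1 ≤ n) {y : ℝ}
    (hy : 0 ≤ y) :
    2 ^ n * (gaussianReal 0 (s * n / 2).toNNReal {x | α * n - β * log n + y ≤ x}).toReal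
      ≤ √(s / (4 * π)) / (α - β) * exp (-(2 * (α - β) / s) * y) := by
  have hN : (0 : ℝ) < n := by exact_mod_cast hn
  have hv : (0 : ℝ) < s * n / 2 := by positivity
  set t := α * n - β * log n + y
  have hγt : (α - β) * n ≤ t := by
    nlinarith [mul_le_mul_of_nonneg_left (log_le_self hN.le) hβ]
  have ht : 0 < t := lt_of_lt_of_le (mul_pos (sub_pos.2 hβα) hN) hγt
  have htail := gaussianReal_Ici_toReal_le (Real.toNNReal_pos.2 hv).ne' ht
  rw [Real.coe_toNNReal _ hv.le] at htail
  have hpre : √(s * n / 2 / (2 * π)) / t ≤ √(s / (4 * π)) / ((α - β) * √n) := by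
    have hsplit : √(s * n / 2 / (2 * π)) = √(s / (4 * π)) * √n := by
      rw [← sqrt_mul (by positivity)]
      congr 1
      field_simp
      ring
    have hγ : 0 < α - β := sub_pos.2 hβα
    calc √(s * n / 2 / (2 * π)) / t ≤ √(s / (4 * π)) * √n / ((α - β) * n) := by
          rw [hsplit]
          gcongr
      _ = √(s / (4 * π)) / ((α - β) * √n) := by
          have := sq_sqrt hN.le
          field_simp
          exact this
  calc 2 ^ n * (gaussianReal 0 (s * n / 2).toNNReal {x | t ≤ x}).toReal
      ≤ 2 ^ n * (√(s / (4 * π)) / ((α - β) * √n)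
          * (√n / 2 ^ n * exp (-(2 * (α - β) / s) * y))) := by
        gcongr
        exact htail.trans (mul_le_mul hpre (exp_neg_threshold_sq_le hs hα hαβ hβ hn hy)
          (exp_pos _).le (by positivity))
    _ = √(s / (4 * π)) / (α - β) * exp (-(2 * (α - β) / s) * y) := by
        field_simp

theorem stmt9_general (σ1 σ2 : ℝ) (h1 : 0 < σ1) :
    ∃ c2 c3 : ℝ, 0 < c2 ∧ 0 < c3 ∧ ∀ n : ℕ, 1 ≤ n → ∀ y : ℝ, 0 ≤ y →
      (2:ℝ)^n *
        ((gaussianReal 0 (Real.toNNReal ((σ1^2 + σ2^2)*n/2)))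
          {x : ℝ | Real.sqrt ((σ1^2 + σ2^2) * Real.log 2) * n
            - (Real.sqrt (σ1^2 + σ2^2)/(4*Real.sqrt (Real.log 2))) * Real.log n
            + y ≤ x}).toReal
      ≤ c2 * Real.exp (-c3 * y) := by
  set s := σ1 ^ 2 + σ2 ^ 2
  have hs : 0 < s := by positivity
  have hlog2 : 1 / 4 < log 2 := by linarith [log_two_gt_d9]
  have hsqrt_log2 := mul_self_sqrt (log_nonneg one_le_two)
  have hα : √(s * log 2) ^ 2 = s * log 2 := sq_sqrt (by positivity)
  have hαβ : √(s * log 2) * (√s / (4 * √(log 2))) = s / 4 := by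
    rw [sqrt_mul hs.le]
    field_simp
    exact sq_sqrt hs.le
  have hβα : √s / (4 * √(log 2)) < √(s * log 2) := by
    rw [sqrt_mul hs.le, div_lt_iff₀ (by positivity)]
    nlinarith [sqrt_pos.2 hs]
  have hγ := sub_pos.2 hβα
  exact ⟨_, _, by positivity, by positivity, fun n hn y hy ↦
    two_pow_mul_gaussianReal_tail_le hs hα hαβ (by positivity) hβα hn hy⟩

/-- first moment upper bound in the increasing variances case.
S_n ~ N(0, (σ₁²+σ₂²)n/2). -/
theorem stmt9 (σ1 σ2 : ℝ) (h1 : 0 < σ1) (h12 : σ1 < σ2) :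
    ∃ c2 c3 : ℝ, 0 < c2 ∧ 0 < c3 ∧ ∀ n : ℕ, 1 ≤ n → ∀ y : ℝ, 0 ≤ y →
      (2:ℝ)^n *
        ((gaussianReal 0 (Real.toNNReal ((σ1^2 + σ2^2)*n/2)))
          {x : ℝ | Real.sqrt ((σ1^2 + σ2^2) * Real.log 2) * n
            - (Real.sqrt (σ1^2 + σ2^2)/(4*Real.sqrt (Real.log 2))) * Real.log n
            + y ≤ x}).toReal
      ≤ c2 * Real.exp (-c3 * y) :=
  stmt9_general σ1 σ2 h1
end

section
/- With S_n ~ N(0, (σ₁²+σ₂²)n/2) and a_n = √((σ₁²+σ₂²) log 2)·n − (√(σ₁²+σ₂²)/(4√(log 2)))·log n, there exists a constant c₄ > 0 independent of n such that 2^n · P(S_n ∈ [a_n, a_n + 1]) ≥ c₄ for all sufficiently large even n. -/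
/-!
Write `s = σ₁² + σ₂²`, `A = √(s log 2)`, `B = √s / (4 √(log 2))` and `a = A n - B log n ≥ 0`.
The centred Gaussian density decreases on `[0, ∞)`, so `P(S_n ∈ [a, a + 1])` is at least the
density at `a + 1`. Since `A² = s log 2` and `4AB = s`,
`(a + 1)² / (s n) = n log 2 - (log n) / 2 + 2A/s + (1 - B log n)² / (s n)`: the first term cancels
`2^n`, the second cancels the normalisation `1 / √(π s n)`, and the last tends to `0`. So
`2^n P(S_n ∈ [a, a + 1]) ≥ exp (-2A/s - 1) / √(π s)` for large `n`.
-/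

open MeasureTheory ProbabilityTheory Real Filter Topology

open scoped NNReal

lemma ProbabilityTheory.gaussianPDFReal_antitoneOn (μ : ℝ) (v : ℝ≥0) :
    AntitoneOn (gaussianPDFReal μ v) (Set.Ici μ) := by
  intro x hx y _ hxy
  simp only [gaussianPDFReal]
  gcongr
  exact sub_nonneg.mpr hx

lemma ProbabilityTheory.mul_gaussianPDFReal_le_gaussianReal_Icc {μ a : ℝ} {v : ℝ≥0} (hv : v ≠ 0)
    (hμa : μ ≤ a) (b : ℝ) :
    (b - a) * gaussianPDFReal μ v b ≤ (gaussianReal μ v (Set.Icc a b)).toReal := by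
  rw [gaussianReal_apply_eq_integral μ hv, ENNReal.toReal_ofReal
    (setIntegral_nonneg measurableSet_Icc fun x _ ↦ gaussianPDFReal_nonneg μ v x)]
  calc (b - a) * gaussianPDFReal μ v b
      ≤ max (b - a) 0 * gaussianPDFReal μ v b := by
        gcongr
        · exact gaussianPDFReal_nonneg μ v b
        · exact le_max_left _ _
    _ = gaussianPDFReal μ v b * volume.real (Set.Icc a b) := by rw [Real.volume_real_Icc, mul_comm]
    _ ≤ ∫ x in Set.Icc a b, gaussianPDFReal μ v x :=
        setIntegral_ge_of_const_le_real measurableSet_Icc (by simp)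
          (fun x hx ↦ gaussianPDFReal_antitoneOn μ v (hμa.trans hx.1)
            (hμa.trans (hx.1.trans hx.2)) hx.2)
          (integrable_gaussianPDFReal μ v).integrableOn

lemma tendsto_sq_one_sub_mul_log_div_atTop (s B : ℝ) :
    Tendsto (fun x : ℝ ↦ (1 - B * log x) ^ 2 / (s * x)) atTop (𝓝 0) := by
  have h (k : ℕ) : Tendsto (fun x : ℝ ↦ log x ^ k / x) atTop (𝓝 0) := by
    simpa using tendsto_pow_log_div_mul_add_atTop 1 0 k one_ne_zero
  have hsum := (((h 0).sub ((h 1).const_mul (2 * B))).add ((h 2).const_mul (B ^ 2))).const_mul s⁻¹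
  simp only [mul_zero, sub_zero, add_zero] at hsum
  refine hsum.congr fun x ↦ ?_
  simp only [pow_zero, pow_one]
  field_simp
  ring

lemma eventually_mul_log_le_mul_atTop {A : ℝ} (hA : 0 < A) (B : ℝ) :
    ∀ᶠ x : ℝ in atTop, B * log x ≤ A * x := by
  have h := ((tendsto_pow_log_div_mul_add_atTop 1 0 1 one_ne_zero).const_mul B).eventually_lt_const
    (by simpa using hA)
  filter_upwards [h, eventually_gt_atTop 0] with x hx hx0
  simp only [pow_one, one_mul, add_zero] at hx
  rw [mul_div_assoc', div_lt_iff₀ hx0] at hx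
  exact hx.le

lemma two_pow_mul_gaussianPDFReal_eq {s A B : ℝ} (hs : 0 < s) (hA : A ^ 2 = s * log 2)
    (hAB : A * B = s / 4) {n : ℕ} (hn : 0 < n) :
    2 ^ n * gaussianPDFReal 0 (s * n / 2).toNNReal (A * n - B * log n + 1)
      = exp (-(2 * A / s) - (1 - B * log n) ^ 2 / (s * n)) / √(π * s) := by
  have hn' : (0 : ℝ) < n := Nat.cast_pos.mpr hn
  have hsqrt : √(2 * π * (s * n / 2)) = √(π * s) * exp (log n / 2) := by
    rw [exp_half, exp_log hn', ← sqrt_mul (by positivity)]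
    ring_nf
  have hexponent : -(A * n - B * log n + 1 - 0) ^ 2 / (2 * (s * n / 2))
      = -(n * log 2) + log n / 2 + (-(2 * A / s) - (1 - B * log n) ^ 2 / (s * n)) := by
    field_simp
    linear_combination -2 * (n : ℝ) ^ 2 * hA + 4 * n * log n * hAB
  rw [gaussianPDFReal, Real.coe_toNNReal _ (by positivity), hsqrt, hexponent, exp_add, exp_add,
    exp_neg, exp_nat_mul, exp_log two_pos]
  field_simp

lemma sqrt_mul_log_two_mul_sqrt_div {s : ℝ} (hs : 0 ≤ s) :
    √(s * log 2) * (√s / (4 * √(log 2))) = s / 4 := by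
  have : √(log 2) ≠ 0 := (sqrt_pos.mpr (log_pos one_lt_two)).ne'
  rw [sqrt_mul hs]
  field_simp
  exact sq_sqrt hs

theorem stmt10_general (σ1 σ2 : ℝ) (h1 : 0 < σ1) :
    ∃ c4 : ℝ, 0 < c4 ∧ ∃ N0 : ℕ, ∀ n : ℕ, N0 ≤ n → Even n →
      c4 ≤ (2:ℝ)^n *
        ((gaussianReal 0 (Real.toNNReal ((σ1^2 + σ2^2)*n/2)))
          (Set.Icc
            (Real.sqrt ((σ1^2 + σ2^2) * Real.log 2) * n
              - (Real.sqrt (σ1^2 + σ2^2)/(4*Real.sqrt (Real.log 2))) * Real.log n)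
            (Real.sqrt ((σ1^2 + σ2^2) * Real.log 2) * n
              - (Real.sqrt (σ1^2 + σ2^2)/(4*Real.sqrt (Real.log 2))) * Real.log n
              + 1))).toReal := by
  set s := σ1 ^ 2 + σ2 ^ 2
  set A := √(s * log 2)
  set B := √s / (4 * √(log 2))
  have hs : 0 < s := by positivity
  have hA : 0 < A := sqrt_pos.mpr (mul_pos hs (log_pos one_lt_two))
  have hA2 : A ^ 2 = s * log 2 := sq_sqrt (by positivity)
  have hAB : A * B = s / 4 := sqrt_mul_log_two_mul_sqrt_div hs.le
  obtain ⟨N0, hN0⟩ := eventually_atTop.mp <|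
    (tendsto_natCast_atTop_atTop.eventually (eventually_mul_log_le_mul_atTop hA B)).and <|
      (((tendsto_sq_one_sub_mul_log_div_atTop s B).comp
        tendsto_natCast_atTop_atTop).eventually_le_const one_pos).and (eventually_gt_atTop 0)
  refine ⟨exp (-(2 * A / s) - 1) / √(π * s), by positivity, N0, fun n hn _ ↦ ?_⟩
  obtain ⟨hBA, hremainder, hn0⟩ := hN0 n hn
  have hv : (s * n / 2).toNNReal ≠ 0 := by
    rw [Ne, toNNReal_eq_zero, not_le]
    positivity
  calc exp (-(2 * A / s) - 1) / √(π * s)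
      ≤ exp (-(2 * A / s) - (1 - B * log n) ^ 2 / (s * n)) / √(π * s) := by
        gcongr
        exact hremainder
    _ = 2 ^ n * gaussianPDFReal 0 (s * n / 2).toNNReal (A * n - B * log n + 1) :=
        (two_pow_mul_gaussianPDFReal_eq hs hA2 hAB hn0).symm
    _ ≤ _ := by
        gcongr
        simpa using mul_gaussianPDFReal_le_gaussianReal_Icc hv (sub_nonneg.mpr hBA)
          (A * n - B * log n + 1)

/-- the expected number of particles in [a_n, a_n+1] is bounded
below, for large even n. -/
theorem stmt10 (σ1 σ2 : ℝ) (h1 : 0 < σ1) (h2 : 0 < σ2) :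
    ∃ c4 : ℝ, 0 < c4 ∧ ∃ N0 : ℕ, ∀ n : ℕ, N0 ≤ n → Even n →
      c4 ≤ (2:ℝ)^n *
        ((gaussianReal 0 (Real.toNNReal ((σ1^2 + σ2^2)*n/2)))
          (Set.Icc
            (Real.sqrt ((σ1^2 + σ2^2) * Real.log 2) * n
              - (Real.sqrt (σ1^2 + σ2^2)/(4*Real.sqrt (Real.log 2))) * Real.log n)
            (Real.sqrt ((σ1^2 + σ2^2) * Real.log 2) * n
              - (Real.sqrt (σ1^2 + σ2^2)/(4*Real.sqrt (Real.log 2))) * Real.log n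
              + 1))).toReal :=
  stmt10_general σ1 σ2 h1
end

section
/- Let σ₁ > σ₂ > 0. For the inhomogeneous sum S'_m = Σ_{i=1}^m Y_i with Y_i i.i.d. N(0,σ₂²), and with the recentering M(k) as below, there exists C such that for k ≤ n/4, 2^k · P( Σ_{i=1}^k X_i > M(k) + f(k) ) ≤ C k^{−3/2} e^{−(√(2 log 2)/σ₁) y}, where X_i are i.i.d. N(0,σ₁²), M(k) = (k/(n/2))(√(2 log 2)σ₁ (n/2) − (3σ₁/(2√(2 log 2))) log(n/2)) and f(k) = y + (5σ₁/(2√(2 log 2))) log k for 1 ≤ k ≤ n/4. -/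
/-!
By the Chernoff bound at `λ = √(2 log 2) / σ₁`, the tail of `N(0, kσ₁²)` beyond `√(2 log 2) σ₁ k + b`
is at most `2⁻ᵏ exp(-(√(2 log 2)/σ₁) b)`: the linear part of the recentring exactly absorbs the
factor `2ᵏ`. Writing the threshold in this form, `b` is `y + (5σ₁/(2√(2 log 2))) log k` minus the
logarithmic correction `(3σ₁/(2√(2 log 2))) (k/2m) log(2m)`, and the latter costs at most a factor
`e · k^{3/2}` because `(3/2)(k/2m) log(2m) ≤ 1 + log k` for `k ≤ m`, using `log x / x ≤ 1/e`.
-/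

open MeasureTheory ProbabilityTheory Real

lemma gaussianReal_real_Ioi_le_exp (μ : ℝ) (v : NNReal) (t : ℝ) {s : ℝ} (hs : 0 ≤ s) :
    (gaussianReal μ v).real (Set.Ioi t) ≤ exp (-s * (t - μ) + v * s ^ 2 / 2) :=
  calc (gaussianReal μ v).real (Set.Ioi t)
      ≤ (gaussianReal μ v).real {x | t ≤ id x} :=
        measureReal_mono fun _ hx => le_of_lt (Set.mem_Ioi.mp hx)
    _ ≤ exp (-s * t) * mgf id (gaussianReal μ v) s :=
      measure_ge_le_exp_mul_mgf t hs (integrable_exp_mul_gaussianReal s)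
    _ = exp (-s * (t - μ) + v * s ^ 2 / 2) := by
      rw [mgf_id_gaussianReal, ← exp_add]; ring_nf

lemma log_le_div_exp_one {x : ℝ} (hx : 0 < x) : log x ≤ x / exp 1 := by
  have h := log_le_sub_one_of_pos (div_pos hx (exp_pos 1))
  rw [log_div hx.ne' (exp_ne_zero 1), log_exp] at h
  linarith

lemma three_halves_mul_div_mul_log_le {k N : ℝ} (hk : 1 ≤ k) (hkN : 2 * k ≤ N) :
    3 / 2 * (k / N * log N) ≤ 1 + log k := by
  have hk0 : 0 < k := by linarith
  have hN0 : 0 < N := by linarith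
  have hlogk : 0 ≤ log k := log_nonneg hk
  have hquot : k / N * log (N / k) ≤ 1 / exp 1 :=
    calc k / N * log (N / k) ≤ k / N * (N / k / exp 1) := by
          gcongr; exact log_le_div_exp_one (by positivity)
      _ = 1 / exp 1 := by field_simp
  have hsmall : k / N * log k ≤ 1 / 2 * log k :=
    mul_le_mul_of_nonneg_right (by rw [div_le_iff₀ hN0]; linarith) hlogk
  have he : 3 / 2 * (1 / exp 1) ≤ 1 := by
    rw [mul_one_div, div_le_one (exp_pos 1)]; linarith [exp_one_gt_d9]
  rw [show log N = log (N / k) + log k by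
    rw [← log_mul (by positivity) hk0.ne', div_mul_cancel₀ _ hk0.ne'], mul_add]
  linarith

lemma two_pow_mul_gaussianReal_Ioi_le {σ : ℝ} (hσ : 0 < σ) (k : ℕ) (b : ℝ) :
    (2 : ℝ) ^ k * (gaussianReal 0 ((k : ℝ) * σ ^ 2).toNNReal).real
        (Set.Ioi (√(2 * log 2) * σ * k + b))
      ≤ exp (-(√(2 * log 2) / σ) * b) := by
  set L := √(2 * log 2)
  have hL2 : L ^ 2 = 2 * log 2 := sq_sqrt (by positivity)
  have hchernoff := gaussianReal_real_Ioi_le_exp 0 ((k : ℝ) * σ ^ 2).toNNReal (L * σ * k + b)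
    (s := L / σ) (div_nonneg (sqrt_nonneg _) hσ.le)
  rw [coe_toNNReal _ (by positivity)] at hchernoff
  calc (2 : ℝ) ^ k * (gaussianReal 0 ((k : ℝ) * σ ^ 2).toNNReal).real (Set.Ioi (L * σ * k + b))
      ≤ exp (k * log 2) * exp (-(L / σ) * (L * σ * k + b - 0) + k * σ ^ 2 * (L / σ) ^ 2 / 2) := by
        rw [exp_nat_mul, exp_log two_pos]; gcongr
    _ = exp (-(L / σ) * b) := by
        rw [← exp_add, show log 2 = L ^ 2 / 2 by linarith]; congr 1; field_simp; ring

/-- first-regime estimate in the decreasing variances upper bound.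
Here n = 4m (so k ≤ n/4 = m and n/2 = 2m); Σ_{i≤k} X_i ~ N(0, kσ₁²). -/
theorem stmt12 (σ1 σ2 : ℝ) (h2 : 0 < σ2) (h12 : σ2 < σ1) :
    ∃ C : ℝ, 0 < C ∧ ∀ m : ℕ, 1 ≤ m → ∀ y : ℝ, 0 < y → ∀ k : ℕ, 1 ≤ k → k ≤ m →
      (2:ℝ)^k *
        ((gaussianReal 0 (Real.toNNReal ((k:ℝ)*σ1^2)))
          {x : ℝ |
            ((k:ℝ)/(2*m)) * (Real.sqrt (2*Real.log 2)*σ1*(2*m)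
              - (3*σ1/(2*Real.sqrt (2*Real.log 2))) * Real.log (2*m))
            + (y + (5*σ1/(2*Real.sqrt (2*Real.log 2))) * Real.log k) < x}).toReal
      ≤ C * ((k:ℝ)^(-(3:ℝ)/2)) * Real.exp (-(Real.sqrt (2*Real.log 2)/σ1) * y) := by
  have hσ1 : 0 < σ1 := h2.trans h12
  set L := √(2 * log 2)
  have hL0 : 0 < L := sqrt_pos.mpr (by positivity)
  refine ⟨exp 1, exp_pos 1, fun m hm y _ k hk hkm => ?_⟩
  have hk0 : (0 : ℝ) < k := by exact_mod_cast hk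
  have hm0 : (0 : ℝ) < m := by exact_mod_cast hm
  have hlog := three_halves_mul_div_mul_log_le (k := k) (N := 2 * m) (by exact_mod_cast hk)
    (by gcongr)
  set b := y + 5 * σ1 / (2 * L) * log k - 3 * σ1 / (2 * L) * (k / (2 * m) * log (2 * m))
    with hb
  have hthreshold : (k : ℝ) / (2 * m) * (L * σ1 * (2 * m) - 3 * σ1 / (2 * L) * log (2 * m))
      + (y + 5 * σ1 / (2 * L) * log k) = L * σ1 * k + b := by
    rw [hb]; field_simp; ring
  have hexponent : -(L / σ1) * b = -(L / σ1) * y - 5 / 2 * log k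
      + 3 / 2 * (k / (2 * m) * log (2 * m)) := by
    rw [hb]; field_simp; ring
  rw [hthreshold]
  calc (2 : ℝ) ^ k * (gaussianReal 0 ((k : ℝ) * σ1 ^ 2).toNNReal {x | L * σ1 * k + b < x}).toReal
      ≤ exp (-(L / σ1) * b) := two_pow_mul_gaussianReal_Ioi_le hσ1 k b
    _ ≤ exp (1 + log k * (-3 / 2) + -(L / σ1) * y) := exp_le_exp.mpr (by linarith)
    _ = exp 1 * (k : ℝ) ^ (-(3 : ℝ) / 2) * exp (-(L / σ1) * y) := by
        rw [exp_add, exp_add, rpow_def_of_pos hk0]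
end
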